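/- Let X and Y be independent exponential random variables with means σ_1² > 0 and σ_2² > 0, let γ > 0, and let Q(t) = (1/√(2π)) ∫_t^∞ e^{−s²/2} ds. Then E[ min{ Q(√(2γX)), Q(√(2γY)) } ] = φ(σ_1²) + φ(σ_2²) − φ(σ_h²), where φ(s) = (1/2)[1 − √(γs/(1+γs))] and 1/σ_h² = 1/σ_1² + 1/σ_2². -/

import Mathlib

open MeasureTheory ProbabilityTheory

/-- The Gaussian tail function `Q t = (1/√(2π)) ∫_t^∞ e^{-s²/2} ds`. -/
noncomputable def gaussQ (t : ℝ) : ℝ :=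
  (1 / Real.sqrt (2 * Real.pi)) * ∫ s in Set.Ioi t, Real.exp (-s ^ 2 / 2)

open Real Set Filter Topology
open scoped ENNReal NNReal

lemma gaussK : Integrable (fun s : ℝ => Real.exp (-s ^ 2 / 2)) := by
  have := integrable_exp_neg_mul_sq (by norm_num : (0:ℝ) < 1/2)
  exact this.congr (Filter.Eventually.of_forall fun s => by ring_nf)

lemma gaussCont : Continuous (fun s : ℝ => Real.exp (-s ^ 2 / 2)) := by continuity

lemma integral_Ioi_sub_Ioi' {f : ℝ → ℝ} (hf : Integrable f) (a b : ℝ) :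
    (∫ s in Set.Ioi a, f s) - ∫ s in Set.Ioi b, f s = ∫ s in a..b, f s := by
  rcases le_total a b with h | h
  · rw [intervalIntegral.integral_of_le h, ← Ioc_union_Ioi_eq_Ioi h,
      setIntegral_union (Set.Ioc_disjoint_Ioi le_rfl) measurableSet_Ioi hf.integrableOn
        hf.integrableOn]
    ring
  · rw [intervalIntegral.integral_symm, intervalIntegral.integral_of_le h,
      ← Ioc_union_Ioi_eq_Ioi h,
      setIntegral_union (Set.Ioc_disjoint_Ioi le_rfl) measurableSet_Ioi hf.integrableOn
        hf.integrableOn]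
    ring

lemma gaussQ_eq (t : ℝ) :
    gaussQ t = gaussQ 0 - (1 / Real.sqrt (2 * Real.pi)) * ∫ s in (0:ℝ)..t, Real.exp (-s ^ 2 / 2) := by
  have h := integral_Ioi_sub_Ioi' gaussK 0 t
  rw [gaussQ, gaussQ, ← h]
  ring

lemma gaussQ_hasDerivAt (t : ℝ) :
    HasDerivAt gaussQ (-((1 / Real.sqrt (2 * Real.pi)) * Real.exp (-t ^ 2 / 2))) t := by
  have h1 : HasDerivAt (fun u => ∫ s in (0:ℝ)..u, Real.exp (-s ^ 2 / 2))
      (Real.exp (-t ^ 2 / 2)) t :=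
    intervalIntegral.integral_hasDerivAt_right gaussK.intervalIntegrable
      (gaussCont.stronglyMeasurableAtFilter _ _) gaussCont.continuousAt
  have h2 := ((h1.const_mul (1 / Real.sqrt (2 * Real.pi))).const_sub (gaussQ 0))
  refine HasDerivAt.congr_of_eventuallyEq ?_ (by filter_upwards with x; exact gaussQ_eq x)
  convert h2 using 1

lemma gaussQ_continuous : Continuous gaussQ :=
  continuous_iff_continuousAt.2 fun t => (gaussQ_hasDerivAt t).continuousAt

lemma gaussQ_antitone : Antitone gaussQ := by
  intro a b hab
  rw [gaussQ_eq a, gaussQ_eq b]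
  have h0 : (0:ℝ) ≤ ∫ s in a..b, Real.exp (-s ^ 2 / 2) := by
    apply intervalIntegral.integral_nonneg hab
    intro x _; positivity
  have hira : ∫ s in (0:ℝ)..b, Real.exp (-s^2/2) = (∫ s in (0:ℝ)..a, Real.exp (-s^2/2)) + ∫ s in a..b, Real.exp (-s^2/2) :=
    (intervalIntegral.integral_add_adjacent_intervals gaussK.intervalIntegrable gaussK.intervalIntegrable).symm
  rw [hira]
  have hc : (0:ℝ) ≤ 1 / Real.sqrt (2 * Real.pi) := by positivity
  nlinarith

lemma gaussQ_nonneg (t : ℝ) : 0 ≤ gaussQ t := by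
  rw [gaussQ]
  apply mul_nonneg (by positivity)
  apply setIntegral_nonneg measurableSet_Ioi
  intro x _; positivity

lemma gaussQ_le_one (t : ℝ) : gaussQ t ≤ 1 := by
  rw [gaussQ]
  have h1 : (∫ s in Set.Ioi t, Real.exp (-s ^ 2 / 2)) ≤ ∫ s : ℝ, Real.exp (-s ^ 2 / 2) :=
    setIntegral_le_integral gaussK (Filter.Eventually.of_forall fun s => by positivity)
  have h2 : (∫ s : ℝ, Real.exp (-s ^ 2 / 2)) = Real.sqrt (2 * Real.pi) := by
    have := integral_gaussian (1/2 : ℝ)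
    rw [show (∫ x : ℝ, Real.exp (-(1/2 : ℝ) * x ^ 2)) = ∫ s : ℝ, Real.exp (-s ^ 2 / 2) from by
      congr 1; funext x; ring_nf] at this
    rw [this]
    congr 1
    rw [div_div_eq_mul_div, div_one, mul_comm]
  calc (1 / Real.sqrt (2 * Real.pi)) * ∫ s in Set.Ioi t, Real.exp (-s ^ 2 / 2)
      ≤ (1 / Real.sqrt (2 * Real.pi)) * Real.sqrt (2 * Real.pi) := by
        apply mul_le_mul_of_nonneg_left (h1.trans_eq h2) (by positivity)
    _ = 1 := by
        rw [one_div_mul_cancel]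
        positivity

lemma gaussQ_zero : gaussQ 0 = 1 / 2 := by
  rw [gaussQ]
  have := integral_gaussian_Ioi (1/2 : ℝ)
  rw [show (∫ x in Set.Ioi (0:ℝ), Real.exp (-(1/2 : ℝ) * x ^ 2)) = ∫ s in Set.Ioi (0:ℝ), Real.exp (-s ^ 2 / 2) from by
    congr 1; funext x; ring_nf] at this
  rw [this, show Real.pi / (1/2) = 2 * Real.pi by ring]
  rw [div_mul_eq_mul_div, one_mul, div_div]
  rw [div_eq_div_iff (by positivity) (by norm_num), one_mul]
  ring


lemma expMeasure_Iic' {r : ℝ} (hr : 0 < r) (x : ℝ) :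
    expMeasure r (Set.Iic x) = ENNReal.ofReal (if 0 ≤ x then 1 - Real.exp (-(r*x)) else 0) := by
  rw [expMeasure, gammaMeasure, withDensity_apply _ measurableSet_Iic]
  exact lintegral_exponentialPDF_eq_antiDeriv hr x

lemma expMeasure_Ioi' {r : ℝ} (hr : 0 < r) {x : ℝ} (hx : 0 ≤ x) :
    expMeasure r (Set.Ioi x) = ENNReal.ofReal (Real.exp (-(r*x))) := by
  haveI := isProbabilityMeasure_expMeasure hr
  rw [show Set.Ioi x = (Set.Iic x)ᶜ from Set.compl_Iic.symm,
    measure_compl measurableSet_Iic (measure_ne_top _ _), measure_univ,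
    expMeasure_Iic' hr, if_pos hx,
    ENNReal.ofReal_sub _ (Real.exp_nonneg _), ENNReal.ofReal_one,
    ENNReal.sub_sub_cancel ENNReal.one_ne_top
      (ENNReal.ofReal_le_one.2 (Real.exp_le_one_iff.2 (by nlinarith)))]

lemma expMeasure_Ioi_neg {r : ℝ} (hr : 0 < r) {x : ℝ} (hx : x < 0) :
    expMeasure r (Set.Ioi x) = 1 := by
  haveI := isProbabilityMeasure_expMeasure hr
  rw [show Set.Ioi x = (Set.Iic x)ᶜ from Set.compl_Iic.symm,
    measure_compl measurableSet_Iic (measure_ne_top _ _), measure_univ,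
    expMeasure_Iic' hr, if_neg (not_le.2 hx), ENNReal.ofReal_zero, tsub_zero]

lemma ext_of_Ioi_prob (μ ν : Measure ℝ) [IsProbabilityMeasure μ] [IsProbabilityMeasure ν]
    (h : ∀ a, μ (Set.Ioi a) = ν (Set.Ioi a)) : μ = ν := by
  refine Measure.ext_of_Iic μ ν fun a => ?_
  rw [show Set.Iic a = (Set.Ioi a)ᶜ from Set.compl_Ioi.symm,
    measure_compl measurableSet_Ioi (measure_ne_top _ _),
    measure_compl measurableSet_Ioi (measure_ne_top _ _), measure_univ, measure_univ, h a]

lemma map_min_exp {Ω : Type*} [MeasurableSpace Ω] (μ : Measure Ω) [IsProbabilityMeasure μ]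
    (X Y : Ω → ℝ) (hX : Measurable X) (hY : Measurable Y) (hindep : IndepFun X Y μ)
    {r₁ r₂ : ℝ} (h₁ : 0 < r₁) (h₂ : 0 < r₂)
    (hdX : Measure.map X μ = expMeasure r₁) (hdY : Measure.map Y μ = expMeasure r₂) :
    Measure.map (fun ω => min (X ω) (Y ω)) μ = expMeasure (r₁ + r₂) := by
  haveI := isProbabilityMeasure_expMeasure (by linarith : (0:ℝ) < r₁ + r₂)
  haveI : IsProbabilityMeasure (Measure.map (fun ω => min (X ω) (Y ω)) μ) :=
    Measure.isProbabilityMeasure_map (hX.min hY).aemeasurable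
  refine ext_of_Ioi_prob _ _ fun t => ?_
  rw [Measure.map_apply (hX.min hY) measurableSet_Ioi]
  have hpre : (fun ω => min (X ω) (Y ω)) ⁻¹' Set.Ioi t = X ⁻¹' Set.Ioi t ∩ Y ⁻¹' Set.Ioi t := by
    ext ω; simp [lt_min_iff]
  rw [hpre, indepFun_iff_measure_inter_preimage_eq_mul.1 hindep _ _ measurableSet_Ioi
    measurableSet_Ioi,
    ← Measure.map_apply hX measurableSet_Ioi, ← Measure.map_apply hY measurableSet_Ioi,
    hdX, hdY]
  rcases le_or_gt 0 t with ht | ht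
  · rw [expMeasure_Ioi' h₁ ht, expMeasure_Ioi' h₂ ht, expMeasure_Ioi' (by linarith) ht,
      ← ENNReal.ofReal_mul (Real.exp_nonneg _), ← Real.exp_add]
    ring_nf
  · rw [expMeasure_Ioi_neg h₁ ht, expMeasure_Ioi_neg h₂ ht, expMeasure_Ioi_neg (by linarith) ht,
      one_mul]


open scoped ENNReal NNReal

lemma G_int {a : ℝ} (ha : 0 < a) :
    IntegrableOn (fun y : ℝ => Real.exp (-(a*y)) / Real.sqrt y) (Set.Ioi 0) ∧
    ∫ y in Set.Ioi 0, Real.exp (-(a*y)) / Real.sqrt y = Real.sqrt (Real.pi / a) := by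
  set G : ℝ → ℝ := fun y => Real.exp (-(a*y)) / Real.sqrt y with hG
  have key : ∀ x ∈ Set.Ioi (0:ℝ), (|(2:ℝ)| * x ^ ((2:ℝ) - 1)) • G (x ^ (2:ℝ))
      = 2 * Real.exp (-a * x^2) := by
    intro x hx
    have hx0 : (0:ℝ) < x := hx
    have hxp : x ^ ((2:ℝ)) = x ^ 2 := by
      rw [show ((2:ℝ)) = ((2:ℕ):ℝ) by norm_num, Real.rpow_natCast]
    have hxp1 : x ^ ((2:ℝ) - 1) = x := by
      norm_num
    rw [hG]
    simp only [smul_eq_mul, hxp, hxp1]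
    rw [Real.sqrt_sq hx0.le]
    rw [show -a * x^2 = -(a * x^2) by ring]
    field_simp
    ring
  have hgauss : IntegrableOn (fun x : ℝ => 2 * Real.exp (-a * x^2)) (Set.Ioi 0) :=
    ((integrable_exp_neg_mul_sq ha).const_mul 2).integrableOn
  constructor
  · rw [← integrableOn_Ioi_comp_rpow_iff G two_ne_zero]
    exact hgauss.congr_fun (fun x hx => (key x hx).symm) measurableSet_Ioi
  · have hsub := integral_comp_rpow_Ioi G (p := 2) two_ne_zero
    rw [← hsub, setIntegral_congr_fun measurableSet_Ioi key, integral_const_mul,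
      integral_gaussian_Ioi]
    ring

lemma F_hasDerivAt {γ : ℝ} (hγ : 0 < γ) {x : ℝ} (hx : 0 < x) :
    HasDerivAt (fun x => gaussQ (Real.sqrt (2*γ*x)))
      (-((1 / Real.sqrt (2 * Real.pi)) * Real.exp (-(γ*x)) * (γ / Real.sqrt (2*γ*x)))) x := by
  have h2γx : 0 < 2*γ*x := by positivity
  have hs : HasDerivAt (fun x : ℝ => Real.sqrt (2*γ*x)) (γ / Real.sqrt (2*γ*x)) x := by
    have hlin : HasDerivAt (fun x : ℝ => 2*γ*x) (2*γ) x := by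
      simpa using (hasDerivAt_id x).const_mul (2*γ)
    have h := (Real.hasDerivAt_sqrt h2γx.ne').comp x hlin
    refine h.congr_deriv ?_
    ring
  have hQ := (gaussQ_hasDerivAt (Real.sqrt (2*γ*x))).comp x hs
  refine hQ.congr_deriv ?_
  rw [Real.sq_sqrt h2γx.le, show -(2*γ*x)/2 = -(γ*x) by ring]
  ring

lemma integral_gaussQ_exp {r γ : ℝ} (hr : 0 < r) (hγ : 0 < γ) :
    ∫ x, gaussQ (Real.sqrt (2*γ*x)) ∂(expMeasure r)
      = 1/2 - Real.sqrt γ / (2 * Real.sqrt (γ + r)) := by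
  set c := 1 / Real.sqrt (2*Real.pi) with hc
  set F : ℝ → ℝ := fun x => gaussQ (Real.sqrt (2*γ*x)) with hF
  have hFcont : Continuous F := by
    apply gaussQ_continuous.comp
    exact (continuous_const.mul continuous_id).sqrt
  have hFnn : ∀ x, 0 ≤ F x := fun x => gaussQ_nonneg _
  have hFle : ∀ x, F x ≤ 1 := fun x => gaussQ_le_one _
  -- step 1: write as Lebesgue integral against density over Ioi 0
  have hd : expMeasure r = volume.withDensity (fun x => ((exponentialPDFReal r x).toNNReal : ℝ≥0∞)) := rfl
  have step1 : ∫ x, F x ∂(expMeasure r) = ∫ x in Set.Ioi 0, F x * (r * Real.exp (-(r*x))) := by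
    rw [hd, integral_withDensity_eq_integral_smul (measurable_exponentialPDFReal r).real_toNNReal]
    have hind : (fun x => ((exponentialPDFReal r x).toNNReal : ℝ≥0) • F x)
        = Set.indicator (Set.Ici 0) (fun x => F x * (r * Real.exp (-(r*x)))) := by
      funext x
      have hpdf : exponentialPDFReal r x = if 0 ≤ x then r * Real.exp (-(r*x)) else 0 := by
        rw [exponentialPDFReal, gammaPDFReal]
        simp only [Real.rpow_one, Real.Gamma_one, div_one, sub_self, Real.rpow_zero, mul_one]
      rcases le_or_gt 0 x with hx | hx
      · rw [Set.indicator_of_mem (Set.mem_Ici.2 hx)]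
        rw [NNReal.smul_def, Real.coe_toNNReal _ (exponentialPDFReal_nonneg hr x), hpdf,
          if_pos hx, smul_eq_mul]
        ring
      · rw [Set.indicator_of_notMem (by simpa [Set.mem_Ici] using not_le.2 hx), NNReal.smul_def, hpdf, if_neg (not_le.2 hx)]
        simp
    rw [hind, integral_indicator measurableSet_Ici, integral_Ici_eq_integral_Ioi]
  rw [step1]
  -- integration by parts
  have hexp_int : IntegrableOn (fun x : ℝ => r * Real.exp (-(r*x))) (Set.Ioi 0) := by
    have h0 : IntegrableOn (fun x : ℝ => r * Real.exp (-r*x)) (Set.Ioi 0) :=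
      (exp_neg_integrableOn_Ioi 0 hr).const_mul r
    exact h0.congr_fun (fun x _ => by beta_reduce; rw [neg_mul]) measurableSet_Ioi
  have hFm : AEStronglyMeasurable F (volume.restrict (Set.Ioi 0)) :=
    hFcont.aestronglyMeasurable
  have huv' : IntegrableOn (fun x => F x * (r * Real.exp (-(r*x)))) (Set.Ioi 0) :=
    hexp_int.bdd_mul hFm (c := 1) (Filter.Eventually.of_forall fun x => by
      rw [Real.norm_eq_abs, abs_of_nonneg (hFnn x)]; exact hFle x)
  have hGint := G_int (show (0:ℝ) < γ + r by linarith)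
  have hfactor : ∀ x ∈ Set.Ioi (0:ℝ),
      (c * γ / Real.sqrt (2*γ)) * (Real.exp (-((γ+r)*x)) / Real.sqrt x)
        = (-(c * Real.exp (-(γ*x)) * (γ / Real.sqrt (2*γ*x)))) * (-Real.exp (-(r*x))) := by
    intro x hx
    have hx0 : (0:ℝ) < x := hx
    rw [show (2*γ*x) = (2*γ)*x by ring, Real.sqrt_mul (by positivity) x]
    rw [show -((γ+r)*x) = -(γ*x) + -(r*x) by ring, Real.exp_add]
    have h1 : Real.sqrt (2*γ) ≠ 0 := by positivity
    have h2 : Real.sqrt x ≠ 0 := by positivity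
    field_simp
  have hu'v : IntegrableOn (fun x =>
      (-(c * Real.exp (-(γ*x)) * (γ / Real.sqrt (2*γ*x)))) * (-Real.exp (-(r*x)))) (Set.Ioi 0) := by
    have h0 : IntegrableOn (fun x : ℝ => (c * γ / Real.sqrt (2*γ)) * (Real.exp (-((γ+r)*x)) / Real.sqrt x)) (Set.Ioi 0) :=
      hGint.1.const_mul _
    exact h0.congr_fun hfactor measurableSet_Ioi
  have h_zero : Filter.Tendsto (fun x => F x * (-Real.exp (-(r*x)))) (nhdsWithin 0 (Set.Ioi 0))
      (nhds (-(1/2))) := by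
    have hcont : Continuous (fun x => F x * (-Real.exp (-(r*x)))) := by
      exact hFcont.mul ((Real.continuous_exp.comp (continuous_const.mul continuous_id).neg).neg)
    have h0 : Filter.Tendsto (fun x => F x * (-Real.exp (-(r*x)))) (nhdsWithin 0 (Set.Ioi 0))
        (nhds (F 0 * (-Real.exp (-(r*0))))) :=
      (hcont.tendsto 0).mono_left nhdsWithin_le_nhds
    convert h0 using 2
    rw [hF]
    simp [gaussQ_zero]
  have h_infty : Filter.Tendsto (fun x => F x * (-Real.exp (-(r*x)))) Filter.atTop (nhds 0) := by
    have h1 : Filter.Tendsto (fun x : ℝ => -(r*x)) Filter.atTop Filter.atBot := by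
      apply Filter.tendsto_neg_atBot_iff.2
      exact Filter.Tendsto.const_mul_atTop hr Filter.tendsto_id
    have ht : Filter.Tendsto (fun x : ℝ => Real.exp (-(r*x))) Filter.atTop (nhds 0) :=
      Real.tendsto_exp_atBot.comp h1
    refine squeeze_zero_norm (fun x => ?_) ht
    rw [Real.norm_eq_abs, abs_mul, abs_neg, abs_of_nonneg (hFnn x), Real.abs_exp]
    nlinarith [hFle x, hFnn x, Real.exp_pos (-(r*x))]
  have key := integral_Ioi_mul_deriv_eq_deriv_mul (a := 0)
    (u := F) (v := fun x => -Real.exp (-(r*x)))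
    (u' := fun x => -(c * Real.exp (-(γ*x)) * (γ / Real.sqrt (2*γ*x))))
    (v' := fun x => r * Real.exp (-(r*x)))
    (fun x hx => F_hasDerivAt hγ hx) (fun x _ => hasDerivAt_neg_exp_mul_exp)
    huv' hu'v h_zero h_infty
  have key2 : ∫ x in Set.Ioi (0:ℝ), F x * (r * Real.exp (-(r*x)))
      = 0 - -(1/2) - ∫ x in Set.Ioi (0:ℝ),
        (-(c * Real.exp (-(γ*x)) * (γ / Real.sqrt (2*γ*x)))) * (-Real.exp (-(r*x))) := key
  rw [key2]
  -- compute the remaining integral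
  have hval : ∫ x in Set.Ioi (0:ℝ),
      (-(c * Real.exp (-(γ*x)) * (γ / Real.sqrt (2*γ*x)))) * (-Real.exp (-(r*x)))
      = (c * γ / Real.sqrt (2*γ)) * Real.sqrt (Real.pi / (γ+r)) := by
    rw [← setIntegral_congr_fun measurableSet_Ioi hfactor, integral_const_mul, hGint.2]
  rw [hval]
  -- final arithmetic
  have hterm : (1 / Real.sqrt (2*Real.pi)) * γ / Real.sqrt (2*γ) * Real.sqrt (Real.pi/(γ+r))
      = Real.sqrt γ / (2 * Real.sqrt (γ+r)) := by
    have h2 : Real.sqrt (2*Real.pi) = Real.sqrt 2 * Real.sqrt Real.pi :=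
      Real.sqrt_mul (by norm_num) _
    have h3 : Real.sqrt (2*γ) = Real.sqrt 2 * Real.sqrt γ := Real.sqrt_mul (by norm_num) _
    have h4 : Real.sqrt (Real.pi/(γ+r)) = Real.sqrt Real.pi / Real.sqrt (γ+r) :=
      Real.sqrt_div Real.pi_pos.le _
    have h5 : Real.sqrt γ * Real.sqrt γ = γ := Real.mul_self_sqrt hγ.le
    have e2 : Real.sqrt 2 * Real.sqrt 2 = 2 := Real.mul_self_sqrt (by norm_num)
    have n1 : Real.sqrt 2 ≠ 0 := by positivity
    have n2 : Real.sqrt Real.pi ≠ 0 := by positivity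
    have n3 : Real.sqrt γ ≠ 0 := by positivity
    have n4 : Real.sqrt (γ+r) ≠ 0 := by positivity
    rw [h2, h3, h4]
    field_simp
    linear_combination (-(Real.sqrt γ * Real.sqrt γ)) * e2 +
      (-2) * h5
  rw [hc, hterm]
  norm_num


lemma integral_gaussQ_comp {Ω : Type*} [MeasurableSpace Ω] (μ : Measure Ω)
    [IsProbabilityMeasure μ] {Z : Ω → ℝ} (hZ : Measurable Z) {r γ : ℝ} (hr : 0 < r) (hγ : 0 < γ)
    (hd : Measure.map Z μ = expMeasure r) :
    ∫ ω, gaussQ (Real.sqrt (2*γ*Z ω)) ∂μ = 1/2 - Real.sqrt γ / (2 * Real.sqrt (γ + r)) := by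
  have hFcont : Continuous (fun x : ℝ => gaussQ (Real.sqrt (2*γ*x))) :=
    gaussQ_continuous.comp (continuous_const.mul continuous_id).sqrt
  calc ∫ ω, gaussQ (Real.sqrt (2*γ*Z ω)) ∂μ
      = ∫ x, gaussQ (Real.sqrt (2*γ*x)) ∂(Measure.map Z μ) :=
        (integral_map hZ.aemeasurable hFcont.aestronglyMeasurable).symm
    _ = 1/2 - Real.sqrt γ / (2 * Real.sqrt (γ + r)) := by
        rw [hd]; exact integral_gaussQ_exp hr hγ

lemma integrable_gaussQ_comp {Ω : Type*} [MeasurableSpace Ω] (μ : Measure Ω)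
    [IsProbabilityMeasure μ] {Z : Ω → ℝ} (hZ : Measurable Z) (γ : ℝ) :
    Integrable (fun ω => gaussQ (Real.sqrt (2*γ*Z ω))) μ := by
  have hFcont : Continuous (fun x : ℝ => gaussQ (Real.sqrt (2*γ*x))) :=
    gaussQ_continuous.comp (continuous_const.mul continuous_id).sqrt
  refine Integrable.mono' (integrable_const 1) ((hFcont.measurable.comp hZ).aestronglyMeasurable) ?_
  filter_upwards with ω
  rw [Real.norm_eq_abs, abs_of_nonneg (gaussQ_nonneg _)]
  exact gaussQ_le_one _

lemma min_gaussQ {γ : ℝ} (hγ : 0 < γ) (x y : ℝ) :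
    min (gaussQ (Real.sqrt (2*γ*x))) (gaussQ (Real.sqrt (2*γ*y)))
      = gaussQ (Real.sqrt (2*γ*x)) + gaussQ (Real.sqrt (2*γ*y))
        - gaussQ (Real.sqrt (2*γ*min x y)) := by
  rcases le_total x y with h | h
  · have hs : Real.sqrt (2*γ*x) ≤ Real.sqrt (2*γ*y) := Real.sqrt_le_sqrt (by nlinarith)
    rw [min_eq_left h, min_eq_right (gaussQ_antitone hs)]
    ring
  · have hs : Real.sqrt (2*γ*y) ≤ Real.sqrt (2*γ*x) := Real.sqrt_le_sqrt (by nlinarith)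
    rw [min_eq_right h, min_eq_left (gaussQ_antitone hs)]
    ring

lemma phi_eq {γ s : ℝ} (hγ : 0 < γ) (hs : 0 < s) :
    (1 / 2 : ℝ) * (1 - Real.sqrt (γ * s / (1 + γ * s)))
      = 1/2 - Real.sqrt γ / (2 * Real.sqrt (γ + 1/s)) := by
  have h1 : γ * s / (1 + γ * s) = γ / (γ + 1/s) := by
    have hne : s ≠ 0 := hs.ne'
    have hne2 : (1 + γ * s) ≠ 0 := by positivity
    have hne3 : (γ + 1/s) ≠ 0 := by positivity
    field_simp
    ring
  rw [h1, Real.sqrt_div hγ.le]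
  ring


/-- Selection-combining average: let `X, Y` be independent exponentials with means
`σ₁², σ₂² > 0` and `γ > 0`.  Then
`E[min{Q(√(2γX)), Q(√(2γY))}] = φ(σ₁²) + φ(σ₂²) − φ(σ_h²)`, where
`φ s = (1/2)(1 − √(γs/(1+γs)))` and `1/σ_h² = 1/σ₁² + 1/σ₂²`. -/
theorem selection_combining_average
    {Ω : Type*} [MeasurableSpace Ω] (μ : Measure Ω) [IsProbabilityMeasure μ]
    (X Y : Ω → ℝ) (hX : Measurable X) (hY : Measurable Y) (hindep : IndepFun X Y μ)
    (σ₁sq σ₂sq : ℝ) (hσ₁ : 0 < σ₁sq) (hσ₂ : 0 < σ₂sq)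
    (hdistX : Measure.map X μ = expMeasure (1 / σ₁sq))
    (hdistY : Measure.map Y μ = expMeasure (1 / σ₂sq))
    (γ : ℝ) (hγ : 0 < γ)
    (φ : ℝ → ℝ) (hφ : ∀ s, φ s = (1 / 2) * (1 - Real.sqrt (γ * s / (1 + γ * s))))
    (σhsq : ℝ) (hσh : 1 / σhsq = 1 / σ₁sq + 1 / σ₂sq) :
    (∫ ω, min (gaussQ (Real.sqrt (2 * γ * X ω))) (gaussQ (Real.sqrt (2 * γ * Y ω))) ∂μ)
      = φ σ₁sq + φ σ₂sq - φ σhsq := by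
  have hr₁ : 0 < 1/σ₁sq := by positivity
  have hr₂ : 0 < 1/σ₂sq := by positivity
  have hσh0 : 0 < σhsq := by
    have h : 0 < 1/σhsq := by rw [hσh]; positivity
    exact one_div_pos.1 h
  have hmin : Measure.map (fun ω => min (X ω) (Y ω)) μ = expMeasure (1/σ₁sq + 1/σ₂sq) :=
    map_min_exp μ X Y hX hY hindep hr₁ hr₂ hdistX hdistY
  have hIX := integral_gaussQ_comp μ hX hr₁ hγ hdistX
  have hIY := integral_gaussQ_comp μ hY hr₂ hγ hdistY
  have hImin := integral_gaussQ_comp μ (hX.min hY) (by positivity) hγ hmin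
  have hintX := integrable_gaussQ_comp μ hX γ
  have hintY := integrable_gaussQ_comp μ hY γ
  have hintmin := integrable_gaussQ_comp μ (hX.min hY) γ
  have hpt : (fun ω => min (gaussQ (Real.sqrt (2 * γ * X ω))) (gaussQ (Real.sqrt (2 * γ * Y ω))))
      = fun ω => gaussQ (Real.sqrt (2*γ*X ω)) + gaussQ (Real.sqrt (2*γ*Y ω))
        - gaussQ (Real.sqrt (2*γ*min (X ω) (Y ω))) := by
    funext ω; exact min_gaussQ hγ _ _
  have hadd : Integrable (fun ω => gaussQ (Real.sqrt (2*γ*X ω)) + gaussQ (Real.sqrt (2*γ*Y ω))) μ :=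
    hintX.add hintY
  rw [hpt, integral_sub hadd hintmin, integral_add hintX hintY, hIX, hIY, hImin,
    hφ σ₁sq, hφ σ₂sq, hφ σhsq, phi_eq hγ hσ₁, phi_eq hγ hσ₂, phi_eq hγ hσh0, hσh]
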